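/- arXiv:2202.00405 — 2 statements merged into one kernel-verified Lean document; each statement's English description precedes it below -/
import Mathlib

section
/- Let K be a field of characteristic different from 2, let n ≥ 1, and let c ∈ GL_n(K) be a GL_n-odd involution, i.e. c² = 1 and |n⁺(c) − n⁻(c)| ≤ 1 where n⁺(c) = dim_K ker(c − I) and n⁻(c) = n − n⁺(c). Then the dimension of the fixed space {X ∈ Mat_n(K) : cX = Xc and tr(X) = 0} of Ad(c) acting on the trace-zero matrices is at most n(n+1)/2 − 1 (the dimension of a Borel subalgebra of sl_n); in other words, every GL_n-odd involution is t-odd. -/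
/-- The fixed space of `Ad(c)` acting on `sl_n`: the subspace of trace-zero
`n × n` matrices commuting with `c`. -/
def slCommutant {K : Type*} [Field K] {n : ℕ} (c : Matrix (Fin n) (Fin n) K) :
    Submodule K (Matrix (Fin n) (Fin n) K) where
  carrier := {X | c * X = X * c ∧ X.trace = 0}
  add_mem' := by
    intro X Y hX hY
    simp only [Set.mem_setOf_eq] at *
    constructor
    · rw [Matrix.mul_add, Matrix.add_mul, hX.1, hY.1]
    · rw [Matrix.trace_add, hX.2, hY.2, add_zero]
  zero_mem' := by simp
  smul_mem' := by
    intro t X hX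
    simp only [Set.mem_setOf_eq] at *
    constructor
    · rw [Matrix.mul_smul, Matrix.smul_mul, hX.1]
    · rw [Matrix.trace_smul, hX.2, smul_zero]

/-!
As `char K ≠ 2`, the involution `c` splits `Kⁿ = V₊ ⊕ V₋` into its `±1`-eigenspaces, of
dimensions `a` and `b`. A matrix commuting with `c` preserves both and is determined by its two
restrictions, so the commutant of `c` has dimension at most `a² + b²`. The commutant contains
`E + cEc` for a matrix unit `E`, whose trace is `2 ≠ 0`, so its trace-zero part has dimension at
most `a² + b² - 1`; finally `2(a² + b²) ≤ n(n + 1)` when `|a - b| ≤ 1`.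
-/

open Module

namespace Module.End

theorem ker_le_comap_ker_of_commute {R M : Type*} [Semiring R] [AddCommMonoid M] [Module R M]
    {g h : End R M} (hgh : Commute g h) : LinearMap.ker h ≤ (LinearMap.ker h).comap g :=
  fun x hx ↦ by
    rw [Submodule.mem_comap, LinearMap.mem_ker, ← mul_apply, ← hgh.eq, mul_apply,
      LinearMap.mem_ker.mp hx, map_zero]

theorem isCompl_ker_sub_one_ker_add_one {R M : Type*} [Ring R] [AddCommGroup M] [Module R M]
    [Invertible (2 : R)] {f : End R M} (hf : f * f = 1) :
    IsCompl (LinearMap.ker (f - 1)) (LinearMap.ker (f + 1)) := by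
  constructor
  · rw [Submodule.disjoint_def]
    intro x hx hx'
    simp only [LinearMap.mem_ker, LinearMap.sub_apply, LinearMap.add_apply, one_apply,
      sub_eq_zero, add_eq_zero_iff_eq_neg] at hx hx'
    have h2x : (2 : R) • x = 0 := by rw [two_smul]; nth_rw 1 [← hx]; rw [hx', neg_add_cancel]
    rw [← one_smul R x, ← invOf_mul_self (2 : R), mul_smul, h2x, smul_zero]
  · rw [codisjoint_iff, eq_top_iff]
    intro x _
    have hfx : f (f x) = x := by rw [← mul_apply, hf, one_apply]
    have hsplit : x = ⅟(2 : R) • (x + f x) + ⅟(2 : R) • (x - f x) := by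
      rw [← smul_add, add_add_sub_cancel, ← two_smul R, smul_smul, invOf_mul_self, one_smul]
    rw [hsplit]
    refine Submodule.add_mem_sup (Submodule.smul_mem _ _ ?_) (Submodule.smul_mem _ _ ?_)
    · simp [hfx, add_comm]
    · simp [hfx]

end Module.End

namespace Submodule

variable {K V : Type*} [Field K] [AddCommGroup V] [Module K V] [FiniteDimensional K V]

theorem finrank_compatibleMaps_inf_le {p q : Submodule K V} (hpq : Codisjoint p q) :
    finrank K ↥(p.compatibleMaps p ⊓ q.compatibleMaps q) ≤ finrank K p ^ 2 + finrank K q ^ 2 := by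
  let restrictPair : ↥(p.compatibleMaps p ⊓ q.compatibleMaps q) →ₗ[K] End K p × End K q :=
    { toFun X := (X.1.restrict fun _ hx ↦ X.2.1 hx, X.1.restrict fun _ hx ↦ X.2.2 hx)
      map_add' _ _ := rfl
      map_smul' _ _ := rfl }
  have hinj : Function.Injective restrictPair := by
    rw [← LinearMap.ker_eq_bot, eq_bot_iff]
    rintro ⟨X, hX⟩ h
    rw [LinearMap.mem_ker] at h
    rw [mem_bot, Subtype.ext_iff, coe_zero]
    ext v
    obtain ⟨y, hy, z, hz, rfl⟩ := mem_sup.mp (hpq.eq_top ▸ mem_top : v ∈ p ⊔ q)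
    have hXy : X y = 0 := congrArg Subtype.val (LinearMap.congr_fun (congrArg Prod.fst h) ⟨y, hy⟩)
    have hXz : X z = 0 := congrArg Subtype.val (LinearMap.congr_fun (congrArg Prod.snd h) ⟨z, hz⟩)
    rw [map_add, hXy, hXz, add_zero, LinearMap.zero_apply]
  calc _ ≤ finrank K (End K p × End K q) := LinearMap.finrank_le_finrank_of_injective hinj
    _ = _ := by rw [finrank_prod, finrank_linearMap, finrank_linearMap, sq, sq]

end Submodule

namespace Matrix

variable {ι : Type*} [Fintype ι] [DecidableEq ι]

theorem isCompl_ker_mulVecLin_sub_one_add_one {R : Type*} [CommRing R] [Invertible (2 : R)]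
    {c : Matrix ι ι R} (hc : c * c = 1) :
    IsCompl (LinearMap.ker (c - 1).mulVecLin) (LinearMap.ker (c + 1).mulVecLin) := by
  show IsCompl (LinearMap.ker (toLinAlgEquiv' (c - 1))) (LinearMap.ker (toLinAlgEquiv' (c + 1)))
  rw [map_sub, map_add, map_one]
  exact Module.End.isCompl_ker_sub_one_ker_add_one (by rw [← map_mul, hc, map_one])

theorem exists_mem_centralizer_trace_ne_zero [Nonempty ι] {R : Type*} [CommRing R]
    (h2 : (2 : R) ≠ 0) {c : Matrix ι ι R} (hc : c * c = 1) :
    ∃ X ∈ Subalgebra.centralizer R {c}, X.trace ≠ 0 := by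
  obtain ⟨i⟩ := ‹Nonempty ι›
  set E : Matrix ι ι R := single i i 1
  refine ⟨E + c * E * c, ?_, ?_⟩
  · rw [Subalgebra.mem_centralizer_iff]
    intro g hg
    rw [Set.mem_singleton_iff.mp hg]
    simp only [mul_add, add_mul, ← mul_assoc, hc, one_mul]
    rw [mul_assoc _ c c, hc, mul_one, add_comm]
  · rwa [trace_add, trace_mul_cycle, hc, one_mul, trace_single_eq_same, one_add_one_eq_two]

theorem finrank_centralizer_le {K : Type*} [Field K] [Invertible (2 : K)] {c : Matrix ι ι K}
    (hc : c * c = 1) :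
    finrank K (Subalgebra.centralizer K {c}).toSubmodule ≤
      finrank K (LinearMap.ker (c - 1).mulVecLin) ^ 2 +
        finrank K (LinearMap.ker (c + 1).mulVecLin) ^ 2 := by
  set p := LinearMap.ker (c - 1).mulVecLin
  set q := LinearMap.ker (c + 1).mulVecLin
  set C := (Subalgebra.centralizer K {c}).toSubmodule
  let e : Matrix ι ι K ≃ₗ[K] End K (ι → K) := toLin'
  have hle : C.map e.toLinearMap ≤ p.compatibleMaps p ⊓ q.compatibleMaps q := by
    rintro _ ⟨X, hX, rfl⟩
    have hXc : Commute X c := ((Subalgebra.mem_centralizer_iff K).mp hX c rfl).symm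
    exact ⟨Module.End.ker_le_comap_ker_of_commute
        ((hXc.sub_right (Commute.one_right X)).map toLinAlgEquiv'),
      Module.End.ker_le_comap_ker_of_commute
        ((hXc.add_right (Commute.one_right X)).map toLinAlgEquiv')⟩
  calc finrank K C = finrank K (C.map e.toLinearMap) := (e.finrank_map_eq C).symm
    _ ≤ finrank K ↥(p.compatibleMaps p ⊓ q.compatibleMaps q) := Submodule.finrank_mono hle
    _ ≤ _ := Submodule.finrank_compatibleMaps_inf_le
        (isCompl_ker_mulVecLin_sub_one_add_one (R := K) hc).codisjoint

end Matrix

theorem Nat.two_mul_sq_add_sq_le_of_abs_sub_le_one {a b : ℕ} (h : |(a : ℤ) - b| ≤ 1) :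
    2 * (a ^ 2 + b ^ 2) ≤ (a + b) * (a + b + 1) := by
  obtain ⟨h₁, h₂⟩ := abs_le.mp h
  zify
  nlinarith

theorem slCommutant_lt_centralizer {K : Type*} [Field K] {n : ℕ} (hn : 0 < n) (h2 : (2 : K) ≠ 0)
    {c : Matrix (Fin n) (Fin n) K} (hc : c * c = 1) :
    slCommutant c < (Subalgebra.centralizer K {c}).toSubmodule := by
  have : Nonempty (Fin n) := ⟨⟨0, hn⟩⟩
  obtain ⟨X, hX, htr⟩ := Matrix.exists_mem_centralizer_trace_ne_zero h2 hc
  refine SetLike.lt_iff_le_and_exists.mpr ⟨fun Y hY ↦ ?_, X, hX, fun hX' ↦ htr hX'.2⟩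
  rintro _ rfl
  exact hY.1

/-- Every `GL_n`-odd involution is t-odd: for an involution `c ∈ GL_n(K)` with
`|n⁺(c) - n⁻(c)| ≤ 1`, the fixed space of `Ad(c)` on `sl_n` has dimension at most
`n(n+1)/2 - 1`, the dimension of a Borel subalgebra of `sl_n`. -/
theorem stmt3 {K : Type*} [Field K] (hK : ringChar K ≠ 2) {n : ℕ} (hn : 1 ≤ n)
    (c : Matrix (Fin n) (Fin n) K) (hc : c * c = 1)
    (a b : ℕ)
    (ha : a = Module.finrank K (LinearMap.ker (c - 1).mulVecLin))
    (hb : b = n - a)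
    (hodd : |(a : ℤ) - (b : ℤ)| ≤ 1) :
    Module.finrank K (slCommutant c) ≤ n * (n + 1) / 2 - 1 := by
  have h2 : (2 : K) ≠ 0 := Ring.two_ne_zero hK
  have : Invertible (2 : K) := invertibleOfNonzero h2
  have hsum := Submodule.finrank_add_eq_of_isCompl
    (Matrix.isCompl_ker_mulVecLin_sub_one_add_one (R := K) hc)
  rw [finrank_fin_fun] at hsum
  have hb' : finrank K (LinearMap.ker (c + 1).mulVecLin) = b := by omega
  have hlt := Submodule.finrank_lt_finrank_of_lt (slCommutant_lt_centralizer hn h2 hc)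
  have hcent := Matrix.finrank_centralizer_le hc
  rw [← ha, hb'] at hcent
  have hsq := Nat.two_mul_sq_add_sq_le_of_abs_sub_le_one hodd
  rw [show a + b = n by omega] at hsq
  omega
end

section
/- Let F be a number field, let K be a field of characteristic different from 2, let n ≥ 1, and suppose that to each real place v of F is assigned a GL_n-odd involution c_v ∈ GL_n(K), i.e. c_v² = 1 and |n⁺(c_v) − n⁻(c_v)| ≤ 1 where n⁺(c_v) = dim_K ker(c_v − I) and n⁻(c_v) = n − n⁺(c_v). Then the sum over the real places v of F of dim_K {X ∈ Mat_n(K) : c_v X = X c_v and tr(X) = 0}, plus (n² − 1) times the number of complex places of F, is at most [F:ℚ] · (n(n+1)/2 − 1). -/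
/-!
An involution `c` over a field of characteristic `≠ 2` splits `Kⁿ` into its `±1`-eigenspaces,
of dimensions `a` and `b = n - a`, and every matrix commuting with `c` preserves both, so the
commutant of `c` embeds into `End(V₊) × End(V₋)` and has dimension at most `a² + b²`. Since
`2(a² + b²) = n² + (a - b)²` and `a - b ≡ n mod 2`, oddness `|a - b| ≤ 1` makes this at most
`n(n+1)/2 - 1` once `n ≥ 2`, while `sl_n = 0` for `n ≤ 1`. Complex places contribute
`n² - 1 ≤ 2(n(n+1)/2 - 1)`, and `r₁ + 2r₂ = [F:ℚ]` sums the local bounds.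
-/

open NumberField

open Module

lemma Module.End.mapsTo_ker_of_commute {R M : Type*} [Semiring R] [AddCommMonoid M]
    [Module R M] {f g : Module.End R M} (h : Commute f g) :
    Set.MapsTo g (LinearMap.ker f) (LinearMap.ker f) := fun x hx => by
  rw [SetLike.mem_coe, LinearMap.mem_ker] at hx ⊢
  rw [← Module.End.mul_apply, h.eq, Module.End.mul_apply, hx, map_zero]

section

variable {K V : Type*} [Field K] [AddCommGroup V] [Module K V]

lemma Module.End.isCompl_ker_sub_one_ker_add_one_s9 (h2 : (2 : K) ≠ 0) {f : Module.End K V}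
    (hf : f * f = 1) : IsCompl (LinearMap.ker (f - 1)) (LinearMap.ker (f + 1)) := by
  have hff (x : V) : f (f x) = x := by rw [← Module.End.mul_apply, hf, Module.End.one_apply]
  constructor
  · rw [Submodule.disjoint_def]
    intro x hp hm
    rw [LinearMap.mem_ker, LinearMap.sub_apply, sub_eq_zero] at hp
    rw [LinearMap.mem_ker, LinearMap.add_apply, hp, Module.End.one_apply, ← two_smul K x] at hm
    exact (smul_eq_zero.mp hm).resolve_left h2
  · rw [codisjoint_iff, Submodule.eq_top_iff']
    intro x
    refine Submodule.mem_sup.mpr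
      ⟨(2⁻¹ : K) • (x + f x), ?_, (2⁻¹ : K) • (x - f x), ?_, ?_⟩
    · simp [hff, add_comm]
    · simp [hff, smul_sub]
    · rw [← smul_add, add_add_sub_cancel, ← two_smul K x, smul_smul, inv_mul_cancel₀ h2,
        one_smul]

lemma Submodule.finrank_le_sq_add_sq_of_mapsTo [FiniteDimensional K V]
    (S : Submodule K (Module.End K V)) {p q : Submodule K V} (hpq : p ⊔ q = ⊤)
    (hp : ∀ g ∈ S, Set.MapsTo g p p) (hq : ∀ g ∈ S, Set.MapsTo g q q) :
    finrank K S ≤ finrank K p ^ 2 + finrank K q ^ 2 := by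
  let restrict : S →ₗ[K] Module.End K p × Module.End K q :=
    { toFun g := (g.1.restrict (hp g g.2), g.1.restrict (hq g g.2))
      map_add' _ _ := rfl
      map_smul' _ _ := rfl }
  have h_inj : Function.Injective restrict := by
    refine (injective_iff_map_eq_zero restrict).mpr fun g hg => ?_
    have hp0 : Set.EqOn g.1 (0 : Module.End K V) p := fun y hy =>
      congr_arg Subtype.val (LinearMap.congr_fun (congr_arg Prod.fst hg) ⟨y, hy⟩)
    have hq0 : Set.EqOn g.1 (0 : Module.End K V) q := fun y hy =>
      congr_arg Subtype.val (LinearMap.congr_fun (congr_arg Prod.snd hg) ⟨y, hy⟩)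
    exact Subtype.ext <| LinearMap.ext fun x =>
      LinearMap.eqOn_sup hp0 hq0 (by simp [hpq])
  calc finrank K S ≤ finrank K (Module.End K p × Module.End K q) :=
        LinearMap.finrank_le_finrank_of_injective h_inj
    _ = finrank K p ^ 2 + finrank K q ^ 2 := by
        rw [Module.finrank_prod, Module.finrank_linearMap, Module.finrank_linearMap, sq, sq]

end

lemma sq_add_sq_le_of_abs_sub_le_one {a b : ℕ} (hab : |(a : ℤ) - b| ≤ 1) (h2 : 2 ≤ a + b) :
    a ^ 2 + b ^ 2 ≤ (a + b) * (a + b + 1) / 2 - 1 := by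
  have hsq : 2 * (a ^ 2 + b ^ 2) + 2 ≤ (a + b) * (a + b + 1) := by
    have hcases : a = b ∨ a = b + 1 ∨ b = a + 1 := by rw [abs_le] at hab; omega
    rcases hcases with rfl | rfl | rfl <;> ring_nf <;> omega
  have hdiv := Nat.div_mul_cancel (Nat.even_mul_succ_self (a + b)).two_dvd
  omega

section slCommutant

variable {K : Type*} [Field K] {n : ℕ}

lemma slCommutant_eq_bot_of_le_one (hn : n ≤ 1) (c : Matrix (Fin n) (Fin n) K) :
    slCommutant c = ⊥ := by
  have : Subsingleton (Fin n) := Fin.subsingleton_iff_le_one.mpr hn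
  refine (Submodule.eq_bot_iff _).mpr fun X ⟨_, htr⟩ => Matrix.ext fun i j => ?_
  obtain rfl := Subsingleton.elim i j
  rwa [Matrix.trace, Fintype.sum_subsingleton _ i] at htr

lemma finrank_slCommutant_le (h2 : (2 : K) ≠ 0) {c : Matrix (Fin n) (Fin n) K}
    (hc : c * c = 1) :
    finrank K (slCommutant c) ≤ finrank K (LinearMap.ker (c - 1).mulVecLin) ^ 2
      + (n - finrank K (LinearMap.ker (c - 1).mulVecLin)) ^ 2 := by
  set f := Matrix.toLinAlgEquiv' c
  have hf : f * f = 1 := by rw [← map_mul, hc, map_one]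
  have hcompl := Module.End.isCompl_ker_sub_one_ker_add_one_s9 h2 hf
  have hsub : f - 1 = (c - 1).mulVecLin := LinearMap.ext fun v => by simp [f]
  have hdim : finrank K (LinearMap.ker (f + 1)) = n - finrank K (LinearMap.ker (f - 1)) := by
    have := Submodule.finrank_add_eq_of_isCompl hcompl
    rw [finrank_fin_fun] at this
    omega
  let S := (slCommutant c).map (Matrix.toLin' : Matrix (Fin n) (Fin n) K ≃ₗ[K] _).toLinearMap
  have hS : ∀ g ∈ S, Commute f g := by
    rintro _ ⟨X, ⟨hX, -⟩, rfl⟩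
    exact (show Commute c X from hX).map Matrix.toLinAlgEquiv'
  calc finrank K (slCommutant c) = finrank K S := (LinearEquiv.finrank_map_eq _ _).symm
    _ ≤ _ := Submodule.finrank_le_sq_add_sq_of_mapsTo S hcompl.sup_eq_top
          (fun g hg => Module.End.mapsTo_ker_of_commute <| (hS g hg).sub_left <| .one_left g)
          (fun g hg => Module.End.mapsTo_ker_of_commute <| (hS g hg).add_left <| .one_left g)
    _ = _ := by rw [hdim, hsub]

lemma finrank_slCommutant_le_of_abs_sub_le_one (h2 : (2 : K) ≠ 0)
    {c : Matrix (Fin n) (Fin n) K} (hc : c * c = 1) {a : ℕ}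
    (ha : a = finrank K (LinearMap.ker (c - 1).mulVecLin))
    (hodd : |(a : ℤ) - ((n - a : ℕ) : ℤ)| ≤ 1) :
    finrank K (slCommutant c) ≤ n * (n + 1) / 2 - 1 := by
  rcases le_or_gt n 1 with hn | hn
  · rw [slCommutant_eq_bot_of_le_one hn, finrank_bot]
    exact Nat.zero_le _
  have ha_le : a ≤ n := ha ▸ (Submodule.finrank_le _).trans (finrank_fin_fun K).le
  calc finrank K (slCommutant c) ≤ a ^ 2 + (n - a) ^ 2 := ha ▸ finrank_slCommutant_le h2 hc
    _ ≤ n * (n + 1) / 2 - 1 := by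
        simpa [Nat.add_sub_cancel' ha_le] using sq_add_sq_le_of_abs_sub_le_one hodd (by omega)

end slCommutant

open scoped Classical in
lemma NumberField.InfinitePlace.sum_add_mul_card_isComplex_le (F : Type*) [Field F]
    [NumberField F] (d : {v : InfinitePlace F // v.IsReal} → ℕ) {B m : ℕ}
    (hd : ∀ v, d v ≤ B) (hm : m ≤ 2 * B) :
    ∑ v, d v + m * Nat.card {v : InfinitePlace F // v.IsComplex} ≤ finrank ℚ F * B := by
  have hrank := InfinitePlace.card_add_two_mul_card_eq_rank F
  rw [InfinitePlace.nrRealPlaces, InfinitePlace.nrComplexPlaces, ← Nat.card_eq_fintype_card,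
    ← Nat.card_eq_fintype_card] at hrank
  calc ∑ v, d v + m * Nat.card {v : InfinitePlace F // v.IsComplex}
      ≤ ∑ _v : {v : InfinitePlace F // v.IsReal}, B
          + 2 * B * Nat.card {v : InfinitePlace F // v.IsComplex} := by
        gcongr with v
        exact hd v
    _ = finrank ℚ F * B := by
        rw [← hrank, Finset.sum_const, Finset.card_univ, ← Nat.card_eq_fintype_card,
          smul_eq_mul]
        ring

open scoped Classical in
theorem stmt9_general (F : Type*) [Field F] [NumberField F]
    {K : Type*} [Field K] (hK : ringChar K ≠ 2) {n : ℕ}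
    (c : {v : InfinitePlace F // v.IsReal} → Matrix (Fin n) (Fin n) K)
    (hinv : ∀ v, c v * c v = 1)
    (a : {v : InfinitePlace F // v.IsReal} → ℕ)
    (ha : ∀ v, a v = Module.finrank K (LinearMap.ker (c v - 1).mulVecLin))
    (hodd : ∀ v, |(a v : ℤ) - ((n - a v : ℕ) : ℤ)| ≤ 1) :
    (∑ v : {v : InfinitePlace F // v.IsReal}, Module.finrank K (slCommutant (c v))) +
        (n ^ 2 - 1) * Nat.card {v : InfinitePlace F // v.IsComplex}
      ≤ Module.finrank ℚ F * (n * (n + 1) / 2 - 1) := by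
  have h2 : (2 : K) ≠ 0 := Ring.two_ne_zero hK
  have hcomplex : n ^ 2 - 1 ≤ 2 * (n * (n + 1) / 2 - 1) := by
    rw [Nat.mul_sub, Nat.mul_div_cancel' (Nat.even_mul_succ_self n).two_dvd]
    rcases n with _ | n
    · simp
    · ring_nf; omega
  exact InfinitePlace.sum_add_mul_card_isComplex_le F _
    (fun v => finrank_slCommutant_le_of_abs_sub_le_one h2 (hinv v) (ha v) (hodd v)) hcomplex

open scoped Classical in
/-- If to each real place `v` of a number field `F` is assigned a `GL_n`-odd involution
`c_v ∈ GL_n(K)` (char `K ≠ 2`), then the sum over real places of the dimension of the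
fixed space of `Ad(c_v)` on `sl_n`, plus `(n² - 1)` times the number of complex places,
is at most `[F:ℚ] · (n(n+1)/2 - 1)`. -/
theorem stmt9 (F : Type*) [Field F] [NumberField F]
    {K : Type*} [Field K] (hK : ringChar K ≠ 2) {n : ℕ} (hn : 1 ≤ n)
    (c : {v : InfinitePlace F // v.IsReal} → Matrix (Fin n) (Fin n) K)
    (hinv : ∀ v, c v * c v = 1)
    (a : {v : InfinitePlace F // v.IsReal} → ℕ)
    (ha : ∀ v, a v = Module.finrank K (LinearMap.ker (c v - 1).mulVecLin))
    (hodd : ∀ v, |(a v : ℤ) - ((n - a v : ℕ) : ℤ)| ≤ 1) :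
    (∑ v : {v : InfinitePlace F // v.IsReal}, Module.finrank K (slCommutant (c v))) +
        (n ^ 2 - 1) * Nat.card {v : InfinitePlace F // v.IsComplex}
      ≤ Module.finrank ℚ F * (n * (n + 1) / 2 - 1) :=
  stmt9_general F hK c hinv a ha hodd
end
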